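/- Let n > 1, d ≥ 2, t be integers with gcd(t,d) = 1, n ≡ t (mod d), and n + d − nd ≤ t ≤ n. Then the sum over k from 0 to (n−t)/d of [2dk+t] · (q^t;q^d)_k^2 (q^{t+n};q^d)_k (q^{t−n};q^d)_k / ((q^d;q^d)_k^2 (q^{d+n};q^d)_k (q^{d−n};q^d)_k) · q^{(d−2t)k} equals exactly ((q^{2t};q^d)_{(n−t)/d} / (q^d;q^d)_{(n−t)/d}) · [n] · q^{t(t−n)/d}. -/

import Mathlib

/-!
Over any field, the terminating very-well-poised `₆φ₅` sum with parameters `a, a, b, Q⁻ᴺ` is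
evaluated by induction on `N`: Zeilberger's certificate `G(N, k)` makes
`A_N F(N+1, k) - B_N F(N, k) = G(N, k+1) - G(N, k)`, so the sums satisfy the first-order
recurrence `A_N S(N+1) = B_N S(N)` of the product side. The theorem is the case `a = q^t`,
`b = q^(t+n)`, `Q = q^d`, `N = (n-t)/d` in `ℚ(q)`; its product side appears after reversing two
finite products, and no denominator vanishes because `q` is not a root of unity and `d ∤ t`.
-/

open Polynomial Finset

/-- The q-shifted factorial `(x; r)_k = (1-x)(1-x r)⋯(1-x r^(k-1))`. -/
noncomputable def qPoch {F : Type*} [Field F] (x r : F) (k : ℕ) : F :=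
  ∏ i ∈ Finset.range k, (1 - x * r ^ i)

/-- The q-integer `[z] = (1-q^z)/(1-q)` (for an arbitrary integer `z`). -/
noncomputable def qInt {F : Type*} [Field F] (q : F) (z : ℤ) : F :=
  (1 - q ^ z) / (1 - q)

/-- The rational function `x ∈ ℚ(q)` is ≡ 0 modulo the polynomial `M`:
its numerator in lowest terms is divisible by `M`, i.e. `x = M·f/g` with `g` coprime to `M`. -/
def ratCongr (M : Polynomial ℚ) (x : RatFunc ℚ) : Prop :=
  ∃ f g : Polynomial ℚ, IsCoprime M g ∧
    x * algebraMap (Polynomial ℚ) (RatFunc ℚ) g =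
      algebraMap (Polynomial ℚ) (RatFunc ℚ) M * algebraMap (Polynomial ℚ) (RatFunc ℚ) f

section
variable {K : Type*} [Field K]

lemma qPoch_succ (x r : K) (k : ℕ) : qPoch x r (k + 1) = qPoch x r k * (1 - x * r ^ k) :=
  prod_range_succ _ _

lemma qPoch_succ' (x r : K) (k : ℕ) : qPoch x r (k + 1) = (1 - x) * qPoch (x * r) r k := by
  simp only [qPoch, prod_range_succ', pow_zero, mul_one, pow_succ, mul_assoc, mul_comm r]
  ring

lemma qPoch_ne_zero {x r : K} (h : ∀ i : ℕ, 1 - x * r ^ i ≠ 0) (k : ℕ) : qPoch x r k ≠ 0 :=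
  prod_ne_zero_iff.2 fun i _ => h i

lemma prod_range_pow_succ_sub_pow (Q : K) (N k : ℕ) :
    (∏ i ∈ range k, (Q ^ (N + 1) - Q ^ i)) * (Q ^ (N + 1) - Q ^ k) =
      (Q ^ (N + 1) - 1) * Q ^ k * ∏ i ∈ range k, (Q ^ N - Q ^ i) := by
  have h : ∀ i : ℕ, Q ^ (N + 1) - Q ^ (i + 1) = Q * (Q ^ N - Q ^ i) := fun i => by ring
  rw [← prod_range_succ (fun i => Q ^ (N + 1) - Q ^ i), prod_range_succ']
  simp only [h, prod_mul_distrib, prod_const, card_range, pow_zero]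
  ring

lemma prod_range_sub_mul_pow (y z r : K) (hy : y ≠ 0) (k : ℕ) :
    ∏ i ∈ range k, (y - z * r ^ i) = y ^ k * qPoch (z / y) r k := by
  rw [qPoch, ← card_range k, ← prod_const, card_range, ← prod_mul_distrib]
  refine prod_congr rfl fun i _ => ?_
  field_simp

lemma prod_range_mul_pow_sub_pow_succ (x Q : K) (N : ℕ) :
    ∏ i ∈ range N, (x * Q ^ N - Q ^ (i + 1)) = (∏ i ∈ range N, -Q ^ (i + 1)) * qPoch x Q N := by
  have h : ∀ i ∈ range N, x * Q ^ N - Q ^ (i + 1) = -Q ^ (i + 1) * (1 - x * Q ^ (N - 1 - i)) := by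
    intro i hi
    obtain ⟨j, rfl⟩ : ∃ j, N = i + 1 + j := ⟨N - 1 - i, by have := mem_range.1 hi; omega⟩
    rw [show i + 1 + j - 1 - i = j by omega, pow_add]
    ring
  rw [prod_congr rfl h, prod_mul_distrib, qPoch, ← prod_range_reflect (fun i => 1 - x * Q ^ i)]

variable (a b Q : K)

/-- Since `∏_{i<k} (Q^N - Q^i) = Q^(Nk) (Q^(-N); Q)_k` and
`∏_{i<k} (b - a Q^(i+1)) = b^k (aQ/b; Q)_k`, this is `1 - a` times the `k`-th term of the
very-well-poised `₆φ₅` with parameters `a, a, b, Q^(-N)` and argument `Q^(N+1)/b`. -/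
noncomputable def sixPhiFiveTerm (N k : ℕ) : K :=
  (1 - a * Q ^ (2 * k)) * qPoch a Q k ^ 2 * qPoch b Q k * (∏ i ∈ range k, (Q ^ N - Q ^ i)) * Q ^ k /
    (qPoch Q Q k ^ 2 * (∏ i ∈ range k, (b - a * Q ^ (i + 1))) * qPoch (a * Q ^ (N + 1)) Q k)

/-- Zeilberger's certificate for the recurrence of `sixPhiFiveTerm` in `N`. -/
noncomputable def sixPhiFiveCert (N k : ℕ) : K :=
  -Q ^ (N + 1) * (1 - a * Q ^ (N + 1)) * qPoch a Q k ^ 2 * qPoch b Q k * (1 - Q ^ k) ^ 2 *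
      (b - a * Q ^ k) * (∏ i ∈ range k, (Q ^ (N + 1) - Q ^ i)) /
    ((1 - Q ^ (N + 1)) * qPoch Q Q k ^ 2 * (∏ i ∈ range k, (b - a * Q ^ (i + 1))) *
      qPoch (a * Q ^ (N + 1)) Q k)

variable {a b Q}

lemma sixPhiFiveTerm_recurrence (hQ : Q ≠ 0) (hQ1 : ∀ i : ℕ, 1 - Q ^ (i + 1) ≠ 0)
    (hab : ∀ i : ℕ, b - a * Q ^ (i + 1) ≠ 0) (haQ : ∀ i : ℕ, 1 - a * Q ^ (i + 1) ≠ 0)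
    (N k : ℕ) :
    (b - a * Q ^ (N + 1)) * (1 - Q ^ (N + 1)) * sixPhiFiveTerm a b Q (N + 1) k -
        (1 - a * Q ^ (N + 1)) * (b - Q ^ (N + 1)) * sixPhiFiveTerm a b Q N k =
      sixPhiFiveCert a b Q N (k + 1) - sixPhiFiveCert a b Q N k := by
  have hQQ : ∀ i, 1 - Q * Q ^ i ≠ 0 := fun i => by rw [← pow_succ']; exact hQ1 i
  have haN : ∀ i, 1 - a * Q ^ (N + 1) * Q ^ i ≠ 0 := fun i => by
    rw [mul_assoc, ← pow_add, show N + 1 + i = N + i + 1 by ring]; exact haQ _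
  have hV : Q ^ (N + 1) - 1 ≠ 0 := sub_ne_zero.2 fun h => hQ1 N (by rw [h, sub_self])
  have hab' : ∏ i ∈ range k, (b - a * Q ^ (i + 1)) ≠ 0 := prod_ne_zero_iff.2 fun i _ => hab i
  -- Expressing the `N + 1` products through the `N` ones leaves a rational identity.
  have hshift : qPoch (a * Q ^ (N + 1 + 1)) Q k =
      qPoch (a * Q ^ (N + 1)) Q k * (1 - a * Q ^ (N + 1) * Q ^ k) / (1 - a * Q ^ (N + 1)) := by
    rw [eq_div_iff (haQ N), ← qPoch_succ, qPoch_succ', pow_succ, mul_assoc]; ring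
  have hterminate : ∏ i ∈ range k, (Q ^ N - Q ^ i) =
      (∏ i ∈ range k, (Q ^ (N + 1) - Q ^ i)) * (Q ^ (N + 1) - Q ^ k) /
        ((Q ^ (N + 1) - 1) * Q ^ k) := by
    rw [prod_range_pow_succ_sub_pow]; field_simp
  rw [sixPhiFiveTerm, sixPhiFiveTerm, hshift, hterminate]
  simp only [sixPhiFiveCert, qPoch_succ, prod_range_succ, ← pow_succ']
  field_simp [qPoch_ne_zero hQQ k, qPoch_ne_zero haN k, hQ1 k, hab k, haN k, hQ1 N, haQ N]
  ring

lemma sixPhiFiveTerm_eq_zero_of_lt {N k : ℕ} (h : N < k) : sixPhiFiveTerm a b Q N k = 0 := by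
  rw [sixPhiFiveTerm, prod_eq_zero (mem_range.2 h) (sub_self _)]
  simp

lemma sixPhiFiveCert_zero (N : ℕ) : sixPhiFiveCert a b Q N 0 = 0 := by
  simp [sixPhiFiveCert]

lemma sixPhiFiveCert_eq_zero_of_lt {N k : ℕ} (h : N + 1 < k) : sixPhiFiveCert a b Q N k = 0 := by
  rw [sixPhiFiveCert, prod_eq_zero (mem_range.2 h) (sub_self _)]
  simp

lemma sum_sixPhiFiveTerm_succ (hQ : Q ≠ 0) (hQ1 : ∀ i : ℕ, 1 - Q ^ (i + 1) ≠ 0)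
    (hab : ∀ i : ℕ, b - a * Q ^ (i + 1) ≠ 0) (haQ : ∀ i : ℕ, 1 - a * Q ^ (i + 1) ≠ 0) (N : ℕ) :
    (b - a * Q ^ (N + 1)) * (1 - Q ^ (N + 1)) *
        ∑ k ∈ range (N + 2), sixPhiFiveTerm a b Q (N + 1) k =
      (1 - a * Q ^ (N + 1)) * (b - Q ^ (N + 1)) *
        ∑ k ∈ range (N + 1), sixPhiFiveTerm a b Q N k := by
  have htelescope := sum_range_sub (sixPhiFiveCert a b Q N) (N + 2)
  simp only [← sixPhiFiveTerm_recurrence hQ hQ1 hab haQ, sum_sub_distrib, ← mul_sum,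
    sum_range_succ _ (N + 1), sixPhiFiveTerm_eq_zero_of_lt (Nat.lt_succ_self N),
    sixPhiFiveCert_eq_zero_of_lt (Nat.lt_succ_self (N + 1)), sixPhiFiveCert_zero] at htelescope
  rw [sum_range_succ _ (N + 1)]
  linear_combination htelescope

theorem sum_sixPhiFiveTerm (hQ : Q ≠ 0) (hQ1 : ∀ i : ℕ, 1 - Q ^ (i + 1) ≠ 0)
    (hab : ∀ i : ℕ, b - a * Q ^ (i + 1) ≠ 0) (haQ : ∀ i : ℕ, 1 - a * Q ^ (i + 1) ≠ 0) (N : ℕ) :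
    ∑ k ∈ range (N + 1), sixPhiFiveTerm a b Q N k =
      qPoch a Q (N + 1) * (∏ i ∈ range N, (b - Q ^ (i + 1))) /
        ((∏ i ∈ range N, (b - a * Q ^ (i + 1))) * qPoch Q Q N) := by
  induction N with
  | zero => simp [sixPhiFiveTerm, qPoch]
  | succ N ih =>
    have hQQ : ∀ i, 1 - Q * Q ^ i ≠ 0 := fun i => by rw [← pow_succ']; exact hQ1 i
    have hab' : ∏ i ∈ range N, (b - a * Q ^ (i + 1)) ≠ 0 := prod_ne_zero_iff.2 fun i _ => hab i
    refine mul_left_cancel₀ (mul_ne_zero (hab N) (hQ1 N)) ?_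
    rw [sum_sixPhiFiveTerm_succ hQ hQ1 hab haQ, ih, qPoch_succ a Q (N + 1), qPoch_succ Q Q N,
      prod_range_succ _ N, prod_range_succ _ N, ← pow_succ']
    field_simp [qPoch_ne_zero hQQ N, hab N, hQ1 N]

lemma zpow_pow_eq_zpow_mul (q : K) (d : ℤ) (m : ℕ) : (q ^ d) ^ m = q ^ (d * m) := by
  rw [← zpow_natCast, ← zpow_mul]

lemma one_sub_zpow_ne_zero {q : K} (hq : ∀ m : ℤ, q ^ m = 1 → m = 0) {m : ℤ} (hm : m ≠ 0) :
    1 - q ^ m ≠ 0 :=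
  sub_ne_zero.2 fun h => hm (hq m h.symm)

lemma zpow_sub_zpow_ne_zero {q : K} (hq0 : q ≠ 0) (hq : ∀ m : ℤ, q ^ m = 1 → m = 0) {α β : ℤ}
    (h : α ≠ β) : q ^ α - q ^ β ≠ 0 := by
  refine sub_ne_zero.2 fun h' => h ?_
  have := hq (α - β) (by rw [zpow_sub₀ hq0, h', div_self (zpow_ne_zero _ hq0)])
  omega

lemma rogers_summand_eq_sixPhiFiveTerm {q : K} (hq0 : q ≠ 0) {n t : ℤ} {d N : ℕ}
    (hN : n - t = d * N) (k : ℕ) :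
    qInt q (2 * (d : ℤ) * k + t) *
        (qPoch (q ^ t) (q ^ (d : ℤ)) k ^ 2 * qPoch (q ^ (t + n)) (q ^ (d : ℤ)) k *
          qPoch (q ^ (t - n)) (q ^ (d : ℤ)) k) /
        (qPoch (q ^ (d : ℤ)) (q ^ (d : ℤ)) k ^ 2 * qPoch (q ^ ((d : ℤ) + n)) (q ^ (d : ℤ)) k *
          qPoch (q ^ ((d : ℤ) - n)) (q ^ (d : ℤ)) k) * q ^ (((d : ℤ) - 2 * t) * k) =
      sixPhiFiveTerm (q ^ t) (q ^ (t + n)) (q ^ (d : ℤ)) N k / (1 - q) := by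
  have hwp : q ^ t * (q ^ (d : ℤ)) ^ (2 * k) = q ^ (2 * (d : ℤ) * k + t) := by
    rw [zpow_pow_eq_zpow_mul, ← zpow_add₀ hq0]; congr 1; push_cast; ring
  have hterminate : ∏ i ∈ range k, ((q ^ (d : ℤ)) ^ N - (q ^ (d : ℤ)) ^ i) =
      ((q ^ (d : ℤ)) ^ N) ^ k * qPoch (q ^ (t - n)) (q ^ (d : ℤ)) k := by
    have h := prod_range_sub_mul_pow _ 1 (q ^ (d : ℤ)) (pow_ne_zero N (zpow_ne_zero d hq0)) k
    simp only [one_mul] at h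
    rw [h, zpow_pow_eq_zpow_mul, one_div, ← zpow_neg, show -((d : ℤ) * N) = t - n by linarith]
  have hpoised : ∏ i ∈ range k, (q ^ (t + n) - q ^ t * (q ^ (d : ℤ)) ^ (i + 1)) =
      (q ^ (t + n)) ^ k * qPoch (q ^ ((d : ℤ) - n)) (q ^ (d : ℤ)) k := by
    have h := prod_range_sub_mul_pow (q ^ (t + n)) (q ^ t * q ^ (d : ℤ)) (q ^ (d : ℤ))
      (zpow_ne_zero _ hq0) k
    simp only [mul_assoc, ← pow_succ'] at h
    rw [h, ← zpow_add₀ hq0, ← zpow_sub₀ hq0]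
    congr 3; ring
  have hshift : q ^ t * (q ^ (d : ℤ)) ^ (N + 1) = q ^ ((d : ℤ) + n) := by
    rw [zpow_pow_eq_zpow_mul, ← zpow_add₀ hq0]; congr 1; push_cast; linarith
  have hargument : q ^ (((d : ℤ) - 2 * t) * k) =
      ((q ^ (d : ℤ)) ^ N) ^ k * (q ^ (d : ℤ)) ^ k / (q ^ (t + n)) ^ k := by
    rw [zpow_mul, zpow_natCast, ← mul_pow, ← div_pow, ← pow_succ, zpow_pow_eq_zpow_mul _ _ (N + 1),
      ← zpow_sub₀ hq0]
    congr 2; push_cast; linarith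
  rw [sixPhiFiveTerm, qInt, hwp, hterminate, hpoised, hshift, hargument]
  ring

lemma rogers_product_eq {q : K} (hq0 : q ≠ 0) (hq : ∀ m : ℤ, q ^ m = 1 → m = 0) {n t : ℤ}
    {d N : ℕ} (hdt : ¬ (d : ℤ) ∣ t) (hN : n - t = d * N) :
    qPoch (q ^ t) (q ^ (d : ℤ)) (N + 1) * (∏ i ∈ range N, (q ^ (t + n) - (q ^ (d : ℤ)) ^ (i + 1))) /
        ((∏ i ∈ range N, (q ^ (t + n) - q ^ t * (q ^ (d : ℤ)) ^ (i + 1))) *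
          qPoch (q ^ (d : ℤ)) (q ^ (d : ℤ)) N) / (1 - q) =
      qPoch (q ^ (2 * t)) (q ^ (d : ℤ)) N / qPoch (q ^ (d : ℤ)) (q ^ (d : ℤ)) N * qInt q n *
        q ^ (-(t * N)) := by
  have hb : q ^ (t + n) = q ^ t * (q ^ t * (q ^ (d : ℤ)) ^ N) := by
    rw [zpow_pow_eq_zpow_mul, ← zpow_add₀ hq0, ← zpow_add₀ hq0]; congr 1; linarith
  have hnum : ∏ i ∈ range N, (q ^ (t + n) - (q ^ (d : ℤ)) ^ (i + 1)) =
      (∏ i ∈ range N, -(q ^ (d : ℤ)) ^ (i + 1)) * qPoch (q ^ (2 * t)) (q ^ (d : ℤ)) N := by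
    rw [hb, ← mul_assoc, ← zpow_add₀ hq0, ← two_mul, prod_range_mul_pow_sub_pow_succ]
  have hden : ∏ i ∈ range N, (q ^ (t + n) - q ^ t * (q ^ (d : ℤ)) ^ (i + 1)) =
      (q ^ t) ^ N *
        ((∏ i ∈ range N, -(q ^ (d : ℤ)) ^ (i + 1)) * qPoch (q ^ t) (q ^ (d : ℤ)) N) := by
    simp only [hb, ← mul_sub, prod_mul_distrib, prod_const, card_range,
      prod_range_mul_pow_sub_pow_succ]
  have hlast : qPoch (q ^ t) (q ^ (d : ℤ)) (N + 1) =
      qPoch (q ^ t) (q ^ (d : ℤ)) N * (1 - q ^ n) := by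
    rw [qPoch_succ, zpow_pow_eq_zpow_mul, ← zpow_add₀ hq0]; congr 3; linarith
  have hexp : q ^ (-(t * N)) = ((q ^ t) ^ N)⁻¹ := by
    rw [zpow_pow_eq_zpow_mul, zpow_neg]
  have hqt : qPoch (q ^ t) (q ^ (d : ℤ)) N ≠ 0 := qPoch_ne_zero (fun i => by
    rw [zpow_pow_eq_zpow_mul, ← zpow_add₀ hq0]
    exact one_sub_zpow_ne_zero hq fun h => hdt ⟨-i, by linarith⟩) N
  have hR : ∏ i ∈ range N, -(q ^ (d : ℤ)) ^ (i + 1) ≠ 0 :=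
    prod_ne_zero_iff.2 fun i _ => by simp [hq0]
  have h1q : 1 - q ≠ 0 := by simpa using one_sub_zpow_ne_zero hq one_ne_zero
  rw [hnum, hden, hlast, hexp, qInt]
  field_simp [hqt, hR, pow_ne_zero N (zpow_ne_zero t hq0)]

theorem sum_rogers_terminating {q : K} (hq0 : q ≠ 0) (hq : ∀ m : ℤ, q ^ m = 1 → m = 0)
    {n t : ℤ} {d N : ℕ} (hd : d ≠ 0) (hdt : ¬ (d : ℤ) ∣ t) (hN : n - t = d * N) :
    ∑ k ∈ range (N + 1),
        qInt q (2 * (d : ℤ) * k + t) *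
          (qPoch (q ^ t) (q ^ (d : ℤ)) k ^ 2 * qPoch (q ^ (t + n)) (q ^ (d : ℤ)) k *
            qPoch (q ^ (t - n)) (q ^ (d : ℤ)) k) /
          (qPoch (q ^ (d : ℤ)) (q ^ (d : ℤ)) k ^ 2 * qPoch (q ^ ((d : ℤ) + n)) (q ^ (d : ℤ)) k *
            qPoch (q ^ ((d : ℤ) - n)) (q ^ (d : ℤ)) k) * q ^ (((d : ℤ) - 2 * t) * k) =
      qPoch (q ^ (2 * t)) (q ^ (d : ℤ)) N / qPoch (q ^ (d : ℤ)) (q ^ (d : ℤ)) N * qInt q n *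
        q ^ (-(t * N)) := by
  have htd : ∀ m : ℤ, t + d * m ≠ 0 := fun m h => hdt ⟨-m, by linarith⟩
  have hQ1 : ∀ i : ℕ, 1 - (q ^ (d : ℤ)) ^ (i + 1) ≠ 0 := fun i => by
    rw [zpow_pow_eq_zpow_mul]
    exact one_sub_zpow_ne_zero hq (mul_ne_zero (by exact_mod_cast hd) (by positivity))
  have hab : ∀ i : ℕ, q ^ (t + n) - q ^ t * (q ^ (d : ℤ)) ^ (i + 1) ≠ 0 := fun i => by
    rw [zpow_pow_eq_zpow_mul, ← zpow_add₀ hq0]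
    exact zpow_sub_zpow_ne_zero hq0 hq fun h => htd (N - (i + 1)) (by push_cast at h; linarith)
  have haQ : ∀ i : ℕ, 1 - q ^ t * (q ^ (d : ℤ)) ^ (i + 1) ≠ 0 := fun i => by
    rw [zpow_pow_eq_zpow_mul, ← zpow_add₀ hq0]; exact one_sub_zpow_ne_zero hq (htd _)
  rw [sum_congr rfl fun k _ => rogers_summand_eq_sixPhiFiveTerm hq0 hN k, ← sum_div,
    sum_sixPhiFiveTerm (zpow_ne_zero _ hq0) hQ1 hab haQ N, rogers_product_eq hq0 hq hdt hN]

end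

theorem RatFunc.X_zpow_eq_one_iff {K : Type*} [Field K] {m : ℤ} :
    (RatFunc.X : RatFunc K) ^ m = 1 ↔ m = 0 := by
  refine ⟨fun h => ?_, fun h => by rw [h, zpow_zero]⟩
  obtain ⟨k, rfl | rfl⟩ := Int.eq_nat_or_neg m <;>
  · simp only [zpow_neg, inv_eq_one, zpow_natCast, neg_eq_zero, Nat.cast_eq_zero] at h ⊢
    by_contra hk
    exact RatFunc.transcendental_X.pow (Nat.pos_of_ne_zero hk) (h ▸ isAlgebraic_one)

theorem stmt12_general (n : ℕ) (d : ℕ) (hd : 2 ≤ d) (t : ℤ)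
    (htd : Int.gcd t (d : ℤ) = 1) (hmod : (n : ℤ) ≡ t [ZMOD (d : ℤ)])
    (ht2 : t ≤ (n : ℤ)) :
    let q : RatFunc ℚ := RatFunc.X
    let N : ℕ := (((n : ℤ) - t) / (d : ℤ)).toNat
    (∑ k ∈ Finset.range (N + 1),
        qInt q (2 * (d : ℤ) * k + t) *
          (qPoch (q ^ t) (q ^ (d : ℤ)) k ^ 2 * qPoch (q ^ (t + (n : ℤ))) (q ^ (d : ℤ)) k *
            qPoch (q ^ (t - (n : ℤ))) (q ^ (d : ℤ)) k) /
          (qPoch (q ^ (d : ℤ)) (q ^ (d : ℤ)) k ^ 2 *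
            qPoch (q ^ ((d : ℤ) + n)) (q ^ (d : ℤ)) k *
            qPoch (q ^ ((d : ℤ) - n)) (q ^ (d : ℤ)) k) * q ^ (((d : ℤ) - 2 * t) * k)) =
      qPoch (q ^ (2 * t)) (q ^ (d : ℤ)) N / qPoch (q ^ (d : ℤ)) (q ^ (d : ℤ)) N *
        qInt q (n : ℤ) * q ^ (t * (t - (n : ℤ)) / (d : ℤ)) := by
  intro q N
  have hdt : ¬ (d : ℤ) ∣ t := fun h => by
    have := Int.gcd_eq_right (Int.natCast_nonneg d) h
    omega
  have hN : (n : ℤ) - t = d * N := by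
    rw [Int.toNat_of_nonneg (Int.ediv_nonneg (by linarith) (by positivity)),
      Int.mul_ediv_cancel' hmod.symm.dvd]
  have hexp : t * (t - n) / d = -(t * N) := by
    rw [show t * (t - n) = -(t * N) * d by linear_combination -t * hN,
      Int.mul_ediv_cancel _ (by omega)]
  rw [hexp]
  exact sum_rogers_terminating RatFunc.X_ne_zero (fun _ => RatFunc.X_zpow_eq_one_iff.1) (by omega)
    hdt hN

/-- The terminating Rogers `₆φ₅` evaluation used in the proof of Theorem 5. -/
theorem stmt12 (n : ℕ) (hn : 1 < n) (d : ℕ) (hd : 2 ≤ d) (t : ℤ)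
    (htd : Int.gcd t (d : ℤ) = 1) (hmod : (n : ℤ) ≡ t [ZMOD (d : ℤ)])
    (ht1 : (n : ℤ) + d - n * d ≤ t) (ht2 : t ≤ (n : ℤ)) :
    let q : RatFunc ℚ := RatFunc.X
    let N : ℕ := (((n : ℤ) - t) / (d : ℤ)).toNat
    (∑ k ∈ Finset.range (N + 1),
        qInt q (2 * (d : ℤ) * k + t) *
          (qPoch (q ^ t) (q ^ (d : ℤ)) k ^ 2 * qPoch (q ^ (t + (n : ℤ))) (q ^ (d : ℤ)) k *
            qPoch (q ^ (t - (n : ℤ))) (q ^ (d : ℤ)) k) /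
          (qPoch (q ^ (d : ℤ)) (q ^ (d : ℤ)) k ^ 2 *
            qPoch (q ^ ((d : ℤ) + n)) (q ^ (d : ℤ)) k *
            qPoch (q ^ ((d : ℤ) - n)) (q ^ (d : ℤ)) k) * q ^ (((d : ℤ) - 2 * t) * k)) =
      qPoch (q ^ (2 * t)) (q ^ (d : ℤ)) N / qPoch (q ^ (d : ℤ)) (q ^ (d : ℤ)) N *
        qInt q (n : ℤ) * q ^ (t * (t - (n : ℤ)) / (d : ℤ)) :=
  stmt12_general n d hd t htd hmod ht2
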